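/- For ε > 0 define the twist map f_ε : ℝ³ → ℝ³ by f_ε(p₁, p₂, p₃) = (p₁, cos(φ)·p₂ − sin(φ)·p₃, sin(φ)·p₂ + cos(φ)·p₃) where φ = 2πε·(p₁ + 1/2); f_ε maps the sphere S = {p ∈ ℝ³ : ‖p‖ = 1/2} to itself. Then there exists ε₀ > 0 such that for every ε with 0 < ε < ε₀ and every g ∈ SO(3) (acting on ℝ³ by matrix multiplication), the map g ∘ f_ε has at least two distinct fixed points on S, i.e. there exist p ≠ q in S with g·(f_ε(p)) = p and g·(f_ε(q)) = q. -/

import Mathlib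

open Matrix Real

namespace TwistAux
variable (M : Matrix (Fin 3) (Fin 3) ℝ)

lemma mmt (hM : Mᵀ * M = 1) : M * Mᵀ = 1 := mul_eq_one_comm.mpr hM

lemma det_sub_one (hM : Mᵀ * M = 1) (hdet : M.det = 1) : (M - 1).det = 0 := by
  have h1 : (M - 1)ᵀ = (-1 : ℝ) • (Mᵀ * (M - 1)) := by
    rw [Matrix.mul_sub, hM, Matrix.mul_one, Matrix.transpose_sub, Matrix.transpose_one]
    simp [sub_eq_add_neg]; abel
  have h2 : (M - 1).det = ((M - 1)ᵀ).det := (Matrix.det_transpose _).symm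
  rw [h1, Matrix.det_smul, Matrix.det_mul, Matrix.det_transpose, hdet] at h2
  simp [Fintype.card_fin] at h2
  linarith

lemma adj_transpose_so3 (hM : Mᵀ * M = 1) (hdet : M.det = 1) : adjugate Mᵀ = M := by
  have h := Matrix.mul_adjugate Mᵀ
  rw [Matrix.det_transpose, hdet, one_smul] at h
  calc adjugate Mᵀ = (M * Mᵀ) * adjugate Mᵀ := by rw [mmt M hM, Matrix.one_mul]
    _ = M * (Mᵀ * adjugate Mᵀ) := by rw [Matrix.mul_assoc]
    _ = M := by rw [h, Matrix.mul_one]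

lemma adj_mul_self (hM : Mᵀ * M = 1) (hdet : M.det = 1) :
    adjugate (M - 1) * M = adjugate (M - 1) := by
  have h := Matrix.adjugate_mul (M - 1)
  rw [det_sub_one M hM hdet, zero_smul] at h
  have h2 : adjugate (M - 1) * M - adjugate (M - 1) = 0 := by
    rw [← h, Matrix.mul_sub, Matrix.mul_one]
  exact sub_eq_zero.mp h2

lemma mul_adj_self (hM : Mᵀ * M = 1) (hdet : M.det = 1) :
    M * adjugate (M - 1) = adjugate (M - 1) := by
  have h := Matrix.mul_adjugate (M - 1)
  rw [det_sub_one M hM hdet, zero_smul] at h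
  have h2 : M * adjugate (M - 1) - adjugate (M - 1) = 0 := by
    rw [← h, Matrix.sub_mul, Matrix.one_mul]
  exact sub_eq_zero.mp h2

lemma adj_symm (hM : Mᵀ * M = 1) (hdet : M.det = 1) :
    (adjugate (M - 1))ᵀ = adjugate (M - 1) := by
  have h1 : (M - 1)ᵀ = (-1 : ℝ) • (Mᵀ * (M - 1)) := by
    rw [Matrix.mul_sub, hM, Matrix.mul_one, Matrix.transpose_sub, Matrix.transpose_one]
    simp [sub_eq_add_neg]; abel
  calc (adjugate (M - 1))ᵀ = adjugate ((M - 1)ᵀ) := Matrix.adjugate_transpose _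
    _ = adjugate ((-1 : ℝ) • (Mᵀ * (M - 1))) := by rw [h1]
    _ = ((-1 : ℝ) ^ (Fintype.card (Fin 3) - 1)) • adjugate (Mᵀ * (M - 1)) :=
        Matrix.adjugate_smul _ _
    _ = adjugate (Mᵀ * (M - 1)) := by norm_num
    _ = adjugate (M - 1) * adjugate Mᵀ := Matrix.adjugate_mul_distrib _ _
    _ = adjugate (M - 1) * M := by rw [adj_transpose_so3 M hM hdet]
    _ = adjugate (M - 1) := adj_mul_self M hM hdet

lemma adj_adj_zero (hM : Mᵀ * M = 1) (hdet : M.det = 1) :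
    adjugate (adjugate (M - 1)) = 0 := by
  rw [Matrix.adjugate_adjugate _ (by simp : Fintype.card (Fin 3) ≠ 1),
    det_sub_one M hM hdet]
  norm_num

lemma aux_le (x y z : ℝ) (h : x ^ 2 + y ^ 2 + z ^ 2 = 1) : x ≤ 1 ∧ y ≤ 1 ∧ z ≤ 1 := by
  refine ⟨?_, ?_, ?_⟩ <;>
    nlinarith [sq_nonneg (x - 1), sq_nonneg (y - 1), sq_nonneg (z - 1), sq_nonneg x,
      sq_nonneg y, sq_nonneg z]

variable (M : Matrix (Fin 3) (Fin 3) ℝ)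

lemma col_norm (hM : Mᵀ * M = 1) (j : Fin 3) :
    M 0 j ^ 2 + M 1 j ^ 2 + M 2 j ^ 2 = 1 := by
  have h := congrFun (congrFun hM j) j
  simp [Matrix.mul_apply, Fin.sum_univ_three, Matrix.one_apply, Matrix.transpose_apply] at h
  nlinarith [h]

lemma diag_le_one (hM : Mᵀ * M = 1) (j : Fin 3) : M j j ≤ 1 := by
  have h := col_norm M hM j
  fin_cases j
  · exact (aux_le _ _ _ h).1
  · exact (aux_le _ _ _ h).2.1
  · exact (aux_le _ _ _ h).2.2

lemma trace_le_three (hM : Mᵀ * M = 1) : M.trace ≤ 3 := by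
  have h0 := diag_le_one M hM 0
  have h1 := diag_le_one M hM 1
  have h2 := diag_le_one M hM 2
  rw [Matrix.trace_fin_three]
  linarith

lemma eq_one_of_trace_eq_three (hM : Mᵀ * M = 1) (htr : M.trace = 3) : M = 1 := by
  rw [Matrix.trace_fin_three] at htr
  have h0 := diag_le_one M hM 0
  have h1 := diag_le_one M hM 1
  have h2 := diag_le_one M hM 2
  have d0 : M 0 0 = 1 := by linarith
  have d1 : M 1 1 = 1 := by linarith
  have d2 : M 2 2 = 1 := by linarith
  have e0 := col_norm M hM 0
  have e1 := col_norm M hM 1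
  have e2 := col_norm M hM 2
  rw [d0] at e0; rw [d1] at e1; rw [d2] at e2
  have z10 : M 1 0 = 0 := by
    have : M 1 0 ^ 2 = 0 := by nlinarith [sq_nonneg (M 1 0), sq_nonneg (M 2 0)]
    exact pow_eq_zero_iff (by norm_num) |>.mp this
  have z20 : M 2 0 = 0 := by
    have : M 2 0 ^ 2 = 0 := by nlinarith [sq_nonneg (M 1 0), sq_nonneg (M 2 0)]
    exact pow_eq_zero_iff (by norm_num) |>.mp this
  have z01 : M 0 1 = 0 := by
    have : M 0 1 ^ 2 = 0 := by nlinarith [sq_nonneg (M 0 1), sq_nonneg (M 2 1)]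
    exact pow_eq_zero_iff (by norm_num) |>.mp this
  have z21 : M 2 1 = 0 := by
    have : M 2 1 ^ 2 = 0 := by nlinarith [sq_nonneg (M 0 1), sq_nonneg (M 2 1)]
    exact pow_eq_zero_iff (by norm_num) |>.mp this
  have z02 : M 0 2 = 0 := by
    have : M 0 2 ^ 2 = 0 := by nlinarith [sq_nonneg (M 0 2), sq_nonneg (M 1 2)]
    exact pow_eq_zero_iff (by norm_num) |>.mp this
  have z12 : M 1 2 = 0 := by
    have : M 1 2 ^ 2 = 0 := by nlinarith [sq_nonneg (M 0 2), sq_nonneg (M 1 2)]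
    exact pow_eq_zero_iff (by norm_num) |>.mp this
  ext i j
  fin_cases i <;> fin_cases j <;>
    simp_all [Matrix.one_apply]

lemma trace_lt_three (hM : Mᵀ * M = 1) (hne : M ≠ 1) : M.trace < 3 :=
  lt_of_le_of_ne (trace_le_three M hM)
    (fun h => hne (eq_one_of_trace_eq_three M hM h))

lemma adj_so3 (hM : Mᵀ * M = 1) (hdet : M.det = 1) : adjugate M = Mᵀ := by
  have h := Matrix.adjugate_mul M
  rw [hdet, one_smul] at h
  calc adjugate M = adjugate M * (M * Mᵀ) := by rw [mmt M hM, Matrix.mul_one]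
    _ = (adjugate M * M) * Mᵀ := by rw [Matrix.mul_assoc]
    _ = Mᵀ := by rw [h, Matrix.one_mul]

lemma trace_adj_sub_one (hM : Mᵀ * M = 1) (hdet : M.det = 1) :
    (adjugate (M - 1)).trace = 3 - M.trace := by
  have h2 : (adjugate M).trace = M.trace := by
    rw [adj_so3 M hM hdet, Matrix.trace_transpose]
  rw [Matrix.adjugate_fin_three] at h2
  rw [Matrix.adjugate_fin_three]
  rw [Matrix.trace_fin_three] at h2 ⊢
  rw [Matrix.trace_fin_three] at h2
  rw [show (M.trace) = M 0 0 + M 1 1 + M 2 2 from Matrix.trace_fin_three M]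
  simp only [Matrix.cons_val', Matrix.cons_val_zero, Matrix.cons_val_one, Matrix.head_cons,
    Matrix.empty_val', Matrix.cons_val_fin_one, Matrix.head_fin_const,
    Matrix.cons_val_two, Matrix.tail_cons, Matrix.sub_apply, Matrix.one_apply_eq,
    Matrix.one_apply_ne, ne_eq] at h2 ⊢
  simp [Matrix.one_apply] at h2 ⊢
  linear_combination h2

lemma build (M : Matrix (Fin 3) (Fin 3) ℝ) (v : Fin 3 → ℝ) (hv : M.mulVec v = v)
    (t c : ℝ) (ht : 0 ≤ t) (hc : 0 < c)
    (hsum : v 0 ^ 2 + v 1 ^ 2 + v 2 ^ 2 = c)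
    (h0 : v 0 ^ 2 = 4 * t ^ 2 * c) :
    ∃ p : Fin 3 → ℝ, M.mulVec p = p ∧ p 0 = t ∧ p 0 ^ 2 + p 1 ^ 2 + p 2 ^ 2 = 1 / 4 := by
  set r := Real.sqrt c with hrdef
  have hr : 0 < r := Real.sqrt_pos.mpr hc
  have hr2 : r ^ 2 = c := Real.sq_sqrt hc.le
  set s : ℝ := if 0 ≤ v 0 then 1 else -1 with hsdef
  have hs2 : s ^ 2 = 1 := by rw [hsdef]; split_ifs <;> norm_num
  have habs : |v 0| = 2 * t * r := by
    have h1 : v 0 ^ 2 = (2 * t * r) ^ 2 := by rw [h0, ← hr2]; ring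
    have h2 : 0 ≤ 2 * t * r := by positivity
    calc |v 0| = Real.sqrt (v 0 ^ 2) := (Real.sqrt_sq_eq_abs _).symm
      _ = Real.sqrt ((2 * t * r) ^ 2) := by rw [h1]
      _ = 2 * t * r := by rw [Real.sqrt_sq h2]
  have hsv : s * v 0 = 2 * t * r := by
    rw [hsdef, ← habs]
    split_ifs with h
    · rw [abs_of_nonneg h]; ring
    · rw [abs_of_neg (lt_of_not_ge h)]; ring
  refine ⟨(s / (2 * r)) • v, ?_, ?_, ?_⟩
  · rw [Matrix.mulVec_smul, hv]
  · show s / (2 * r) * v 0 = t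
    field_simp
    linarith [hsv]
  · show (s / (2*r) * v 0) ^ 2 + (s / (2*r) * v 1) ^ 2 + (s / (2*r) * v 2) ^ 2 = 1/4
    have : (s / (2*r)) ^ 2 * (v 0 ^ 2 + v 1 ^ 2 + v 2 ^ 2) = 1 / 4 := by
      rw [hsum, div_pow, hs2, mul_pow]
      rw [hr2]
      field_simp
      ring
    nlinarith [this]

end TwistAux

namespace TwistAux

lemma diag_nonneg_aux (a b c p q r : ℝ) (h1 : a * b = p ^ 2) (h2 : a * c = q ^ 2)
    (h3 : b * c = r ^ 2) (h : 0 < a + b + c) : 0 ≤ a ∧ 0 ≤ b ∧ 0 ≤ c := by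
  refine ⟨?_, ?_, ?_⟩ <;> by_contra hneg <;> push_neg at hneg
  · have hb : b ≤ 0 := by nlinarith [sq_nonneg p]
    have hc : c ≤ 0 := by nlinarith [sq_nonneg q]
    linarith
  · have ha : a ≤ 0 := by nlinarith [sq_nonneg p]
    have hc : c ≤ 0 := by nlinarith [sq_nonneg r]
    linarith
  · have ha : a ≤ 0 := by nlinarith [sq_nonneg q]
    have hb : b ≤ 0 := by nlinarith [sq_nonneg r]
    linarith

set_option maxHeartbeats 1000000 in
lemma fixed_vec (M : Matrix (Fin 3) (Fin 3) ℝ) (hM : Mᵀ * M = 1) (hdet : M.det = 1)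
    (htr : M.trace < 3) (t : ℝ) (ht : 0 ≤ t)
    (h00 : adjugate (M - 1) 0 0 = 4 * t ^ 2 * (3 - M.trace)) :
    ∃ p : Fin 3 → ℝ, M.mulVec p = p ∧ p 0 = t ∧ p 0 ^ 2 + p 1 ^ 2 + p 2 ^ 2 = 1 / 4 := by
  have hτ : 0 < 3 - M.trace := by linarith
  set A := adjugate (M - 1) with hAdef
  set τ := 3 - M.trace with hτdef
  have htrA : A 0 0 + A 1 1 + A 2 2 = τ := by
    have := trace_adj_sub_one M hM hdet
    rw [Matrix.trace_fin_three] at this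
    exact this
  have hsym := adj_symm M hM hdet
  have s01 : A 0 1 = A 1 0 := by
    have := congrFun (congrFun hsym 1) 0
    simpa using this
  have s02 : A 0 2 = A 2 0 := by
    have := congrFun (congrFun hsym 2) 0
    simpa using this
  have s12 : A 1 2 = A 2 1 := by
    have := congrFun (congrFun hsym 2) 1
    simpa using this
  have hz := adj_adj_zero M hM hdet
  rw [Matrix.adjugate_fin_three] at hz
  have m01 : A 0 0 * A 1 1 - A 0 1 * A 1 0 = 0 := by
    have := congrFun (congrFun hz 2) 2
    simpa using this
  have m02 : A 0 0 * A 2 2 - A 0 2 * A 2 0 = 0 := by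
    have := congrFun (congrFun hz 1) 1
    simpa using this
  have m12 : A 1 1 * A 2 2 - A 1 2 * A 2 1 = 0 := by
    have := congrFun (congrFun hz 0) 0
    simpa using this
  clear hz hsym
  obtain ⟨n0, n1, n2⟩ := diag_nonneg_aux (A 0 0) (A 1 1) (A 2 2) (A 0 1) (A 0 2) (A 1 2)
    (by rw [s01] at m01 ⊢; linarith) (by rw [s02] at m02 ⊢; linarith)
    (by rw [s12] at m12 ⊢; linarith) (by linarith)
  have hMA := mul_adj_self M hM hdet
  have hcol : ∀ j : Fin 3, M.mulVec (fun i => A i j) = fun i => A i j := by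
    intro j
    funext i
    have h := congrFun (congrFun hMA i) j
    rw [Matrix.mul_apply] at h
    simpa [Matrix.mulVec, dotProduct] using h
  rcases lt_trichotomy (A 0 0) 0 with h|h|h
  · linarith
  · have ht0 : t = 0 := by
      have h4 : 4 * t ^ 2 * τ = 0 := by rw [← h00, ← h]
      have h5 : t ^ 2 = 0 := by
        rcases mul_eq_zero.mp h4 with h5 | h5
        · rcases mul_eq_zero.mp h5 with h6 | h6
          · norm_num at h6
          · exact h6
        · linarith
      exact pow_eq_zero_iff (by norm_num) |>.mp h5
    rcases lt_trichotomy (A 1 1) 0 with h1|h1|h1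
    · linarith
    · have h2 : 0 < A 2 2 := by linarith
      refine build M (fun i => A i 2) (hcol 2) t (τ * A 2 2) ht (mul_pos hτ h2) ?_ ?_
      · show A 0 2 ^ 2 + A 1 2 ^ 2 + A 2 2 ^ 2 = τ * A 2 2
        linear_combination (-1 : ℝ) * m02 + (-1 : ℝ) * m12 + A 2 2 * htrA
          + A 0 2 * s02 + A 1 2 * s12
      · show A 0 2 ^ 2 = 4 * t ^ 2 * (τ * A 2 2)
        rw [ht0]
        linear_combination (-1 : ℝ) * m02 + A 2 2 * h + A 0 2 * s02
    · refine build M (fun i => A i 1) (hcol 1) t (τ * A 1 1) ht (mul_pos hτ h1) ?_ ?_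
      · show A 0 1 ^ 2 + A 1 1 ^ 2 + A 2 1 ^ 2 = τ * A 1 1
        linear_combination (-1 : ℝ) * m01 + (-1 : ℝ) * m12 + A 1 1 * htrA
          + A 0 1 * s01 - A 2 1 * s12
      · show A 0 1 ^ 2 = 4 * t ^ 2 * (τ * A 1 1)
        rw [ht0]
        linear_combination (-1 : ℝ) * m01 + A 1 1 * h + A 0 1 * s01
  · refine build M (fun i => A i 0) (hcol 0) t (τ * A 0 0) ht (mul_pos hτ h) ?_ ?_
    · show A 0 0 ^ 2 + A 1 0 ^ 2 + A 2 0 ^ 2 = τ * A 0 0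
      linear_combination (-1 : ℝ) * m01 + (-1 : ℝ) * m02 + A 0 0 * htrA
        - A 1 0 * s01 - A 2 0 * s02
    · show A 0 0 ^ 2 = 4 * t ^ 2 * (τ * A 0 0)
      linear_combination A 0 0 * h00


lemma adj_diag_bounds (M : Matrix (Fin 3) (Fin 3) ℝ) (hM : Mᵀ * M = 1) (hdet : M.det = 1)
    (htr : M.trace < 3) :
    0 ≤ adjugate (M - 1) 0 0 ∧ adjugate (M - 1) 0 0 ≤ 3 - M.trace := by
  set A := adjugate (M - 1) with hAdef
  have htrA : A 0 0 + A 1 1 + A 2 2 = 3 - M.trace := by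
    have := trace_adj_sub_one M hM hdet
    rw [Matrix.trace_fin_three] at this
    exact this
  have hsym := adj_symm M hM hdet
  have s01 : A 0 1 = A 1 0 := by simpa using congrFun (congrFun hsym 1) 0
  have s02 : A 0 2 = A 2 0 := by simpa using congrFun (congrFun hsym 2) 0
  have s12 : A 1 2 = A 2 1 := by simpa using congrFun (congrFun hsym 2) 1
  have hz := adj_adj_zero M hM hdet
  rw [Matrix.adjugate_fin_three] at hz
  have m01 : A 0 0 * A 1 1 - A 0 1 * A 1 0 = 0 := by simpa using congrFun (congrFun hz 2) 2
  have m02 : A 0 0 * A 2 2 - A 0 2 * A 2 0 = 0 := by simpa using congrFun (congrFun hz 1) 1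
  have m12 : A 1 1 * A 2 2 - A 1 2 * A 2 1 = 0 := by simpa using congrFun (congrFun hz 0) 0
  obtain ⟨n0, n1, n2⟩ := diag_nonneg_aux (A 0 0) (A 1 1) (A 2 2) (A 0 1) (A 0 2) (A 1 2)
    (by rw [s01] at m01 ⊢; linarith) (by rw [s02] at m02 ⊢; linarith)
    (by rw [s12] at m12 ⊢; linarith) (by linarith)
  exact ⟨n0, by linarith⟩

noncomputable def Rx (θ : ℝ) : Matrix (Fin 3) (Fin 3) ℝ :=
  !![1, 0, 0; 0, Real.cos θ, -Real.sin θ; 0, Real.sin θ, Real.cos θ]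

lemma Rx_transpose (θ : ℝ) :
    (Rx θ)ᵀ = !![1, 0, 0; 0, Real.cos θ, Real.sin θ; 0, -Real.sin θ, Real.cos θ] := by
  ext i j
  fin_cases i <;> fin_cases j <;> simp [Rx, Matrix.vecHead, Matrix.vecTail]

lemma Rx_orth (θ : ℝ) : (Rx θ)ᵀ * Rx θ = 1 := by
  rw [Rx_transpose, Rx, Matrix.mul_fin_three]
  ext i j
  fin_cases i <;> fin_cases j <;>
    simp [Matrix.one_apply, Matrix.vecHead, Matrix.vecTail] <;>
    nlinarith [Real.sin_sq_add_cos_sq θ]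

lemma Rx_det (θ : ℝ) : (Rx θ).det = 1 := by
  rw [Matrix.det_fin_three]
  simp [Rx]
  nlinarith [Real.sin_sq_add_cos_sq θ]

lemma Rx_mulVec (θ : ℝ) (p : Fin 3 → ℝ) :
    (Rx θ).mulVec p =
      ![p 0, Real.cos θ * p 1 - Real.sin θ * p 2, Real.sin θ * p 1 + Real.cos θ * p 2] := by
  funext i
  fin_cases i <;>
    simp [Rx, Matrix.mulVec, dotProduct, Fin.sum_univ_three] <;> ring

/-- The core existence result, on the level of plain vectors. -/
lemma core (g : Matrix (Fin 3) (Fin 3) ℝ) (hg : gᵀ * g = 1) (hgdet : g.det = 1) (ω : ℝ) :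
    ∃ p q : Fin 3 → ℝ, p ≠ q ∧
      p 0 ^ 2 + p 1 ^ 2 + p 2 ^ 2 = 1 / 4 ∧ q 0 ^ 2 + q 1 ^ 2 + q 2 ^ 2 = 1 / 4 ∧
      (g * Rx (ω * (p 0 + 1/2))).mulVec p = p ∧
      (g * Rx (ω * (q 0 + 1/2))).mulVec q = q := by
  by_cases hcol : g 0 0 = 1 ∧ g 1 0 = 0 ∧ g 2 0 = 0
  · -- the poles are fixed
    obtain ⟨c0, c1, c2⟩ := hcol
    have hfix : ∀ a : ℝ, (g * Rx (ω * (a + 1/2))).mulVec ![a, 0, 0] = ![a, 0, 0] := by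
      intro a
      funext i
      fin_cases i <;>
        simp [Matrix.mulVec, dotProduct, Fin.sum_univ_three, Matrix.mul_apply, Rx,
          c0, c1, c2]
    refine ⟨![1/2, 0, 0], ![-(1/2), 0, 0], ?_, by norm_num; rfl, by norm_num; rfl, ?_, ?_⟩
    · intro h
      have := congrFun h 0
      norm_num at this
    · simpa using hfix (1/2)
    · simpa using hfix (-(1/2))
  · -- the generic case
    set M : ℝ → Matrix (Fin 3) (Fin 3) ℝ := fun t => g * Rx (ω * (t + 1/2)) with hMdef
    have hM : ∀ t, (M t)ᵀ * M t = 1 := by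
      intro t
      rw [hMdef]
      simp only [Matrix.transpose_mul]
      calc (Rx (ω * (t + 1/2)))ᵀ * gᵀ * (g * Rx (ω * (t + 1/2)))
          = (Rx (ω * (t + 1/2)))ᵀ * (gᵀ * g) * Rx (ω * (t + 1/2)) := by
            rw [Matrix.mul_assoc, Matrix.mul_assoc, Matrix.mul_assoc]
        _ = 1 := by rw [hg, Matrix.mul_one, Rx_orth]
    have hdet : ∀ t, (M t).det = 1 := by
      intro t
      rw [hMdef]
      simp [Matrix.det_mul, hgdet, Rx_det]
    have hne : ∀ t, M t ≠ 1 := by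
      intro t h
      apply hcol
      have hRR : Rx (ω * (t + 1/2)) * (Rx (ω * (t + 1/2)))ᵀ = 1 :=
        mul_eq_one_comm.mpr (Rx_orth _)
      have h' : g * Rx (ω * (t + 1/2)) = 1 := h
      have hgR : g = (Rx (ω * (t + 1/2)))ᵀ := by
        calc g = g * (Rx (ω * (t + 1/2)) * (Rx (ω * (t + 1/2)))ᵀ) := by
              rw [hRR, Matrix.mul_one]
          _ = (g * Rx (ω * (t + 1/2))) * (Rx (ω * (t + 1/2)))ᵀ := by rw [Matrix.mul_assoc]
          _ = (Rx (ω * (t + 1/2)))ᵀ := by rw [h', Matrix.one_mul]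
      refine ⟨?_, ?_, ?_⟩ <;> rw [hgR] <;> simp [Rx]
    have htr : ∀ t, (M t).trace < 3 := fun t => trace_lt_three (M t) (hM t) (hne t)
    -- continuity of the IVT function
    have hc : ∀ i j : Fin 3, Continuous fun t : ℝ => M t i j := by
      intro i j
      simp only [hMdef, Matrix.mul_apply, Fin.sum_univ_three]
      fin_cases j <;> simp [Rx] <;> fun_prop
    set h : ℝ → ℝ := fun t => adjugate (M t - 1) 0 0 - 4 * t ^ 2 * (3 - (M t).trace)
      with hhdef
    have hcont : Continuous h := by
      have h2 : (fun t => adjugate (M t - 1) 0 0) =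
          fun t => (M t 1 1 - 1) * (M t 2 2 - 1) - M t 1 2 * M t 2 1 := by
        funext t
        rw [Matrix.adjugate_fin_three]
        simp [Matrix.sub_apply, Matrix.one_apply]
      have htrc : Continuous fun t => (M t).trace := by
        simp only [Matrix.trace_fin_three]
        exact ((hc 0 0).add (hc 1 1)).add (hc 2 2)
      rw [hhdef]
      have hadj : Continuous fun t => adjugate (M t - 1) 0 0 := by
        rw [h2]
        exact (((hc 1 1).sub continuous_const).mul ((hc 2 2).sub continuous_const)).sub
          ((hc 1 2).mul (hc 2 1))
      exact hadj.sub
        (((continuous_const.mul ((continuous_id.pow 2) : Continuous fun t : ℝ => t ^ 2)).mul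
          (continuous_const.sub htrc)))
    -- endpoint estimates
    have hbounds : ∀ t, 0 ≤ adjugate (M t - 1) 0 0 ∧
        adjugate (M t - 1) 0 0 ≤ 3 - (M t).trace :=
      fun t => adj_diag_bounds (M t) (hM t) (hdet t) (htr t)
    have h0pos : 0 ≤ h 0 := by
      have := (hbounds 0).1
      simp only [hhdef]
      norm_num
      linarith
    have hhalf : h (1/2) ≤ 0 := by
      have := (hbounds (1/2)).2
      simp only [hhdef]
      norm_num
      linarith
    have hneghalf : h (-(1/2)) ≤ 0 := by
      have := (hbounds (-(1/2))).2
      simp only [hhdef]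
      norm_num
      linarith
    obtain ⟨t₁, ht₁m, ht₁⟩ : ∃ t₁ ∈ Set.Icc (0:ℝ) (1/2), h t₁ = 0 := by
      have := intermediate_value_Icc' (by norm_num : (0:ℝ) ≤ 1/2) hcont.continuousOn
      obtain ⟨t₁, htm, ht⟩ := this ⟨hhalf, h0pos⟩
      exact ⟨t₁, htm, ht⟩
    obtain ⟨t₂, ht₂m, ht₂⟩ : ∃ t₂ ∈ Set.Icc (-(1/2):ℝ) 0, h t₂ = 0 := by
      have := intermediate_value_Icc (by norm_num : (-(1/2):ℝ) ≤ 0) hcont.continuousOn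
      obtain ⟨t₂, htm, ht⟩ := this ⟨hneghalf, h0pos⟩
      exact ⟨t₂, htm, ht⟩
    have hA1 : adjugate (M t₁ - 1) 0 0 = 4 * t₁ ^ 2 * (3 - (M t₁).trace) := by
      have := ht₁
      simp only [hhdef] at this
      linarith
    have hA2 : adjugate (M t₂ - 1) 0 0 = 4 * (-t₂) ^ 2 * (3 - (M t₂).trace) := by
      have := ht₂
      simp only [hhdef] at this
      nlinarith [this]
    obtain ⟨p, hp, hp0, hpsq⟩ := fixed_vec (M t₁) (hM t₁) (hdet t₁) (htr t₁) t₁ ht₁m.1 hA1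
    obtain ⟨p', hp', hp0', hpsq'⟩ :=
      fixed_vec (M t₂) (hM t₂) (hdet t₂) (htr t₂) (-t₂) (by linarith [ht₂m.2]) hA2
    have hq' : (M t₂).mulVec (-p') = -p' := by rw [Matrix.mulVec_neg, hp']
    have hq0 : (-p') 0 = t₂ := by simp [hp0']
    have hqsq : (-p') 0 ^ 2 + (-p') 1 ^ 2 + (-p') 2 ^ 2 = 1/4 := by
      simpa [neg_sq] using hpsq'
    have hpne : p ≠ 0 := by
      intro h0
      rw [h0] at hpsq
      norm_num at hpsq
    by_cases hpq : p = -p'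
    · -- then t₁ = t₂ = 0; use p and -p
      have e : t₁ = t₂ := by rw [← hp0, hpq, hq0]
      have ht1z : t₁ = 0 := le_antisymm (e ▸ ht₂m.2) ht₁m.1
      refine ⟨p, -p, ?_, hpsq, by simpa [neg_sq] using hpsq, ?_, ?_⟩
      · intro hcon
        apply hpne
        funext i
        have h2 := congrFun hcon i
        simp only [Pi.neg_apply] at h2
        simpa using by linarith [h2] 
      · rw [hp0]
        exact hp
      · have hnp0 : (-p) 0 = t₁ := by simp [hp0, ht1z]
        rw [hnp0, Matrix.mulVec_neg, hp]
    · refine ⟨p, -p', hpq, hpsq, hqsq, ?_, ?_⟩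
      · rw [hp0]
        exact hp
      · rw [hq0]
        exact hq'

end TwistAux



/-- The twist map `f_ε` of `ℝ³` (with the Euclidean norm): it fixes the first coordinate and
rotates the `(p₂,p₃)`-plane by the angle `2πε(p₁ + 1/2)`; it maps the sphere of radius `1/2`
to itself. -/
noncomputable def twist (ε : ℝ) (p : EuclideanSpace ℝ (Fin 3)) : EuclideanSpace ℝ (Fin 3) :=
  (WithLp.equiv 2 (Fin 3 → ℝ)).symm
    ![p 0,
      Real.cos (2 * Real.pi * ε * (p 0 + 1/2)) * p 1 -
        Real.sin (2 * Real.pi * ε * (p 0 + 1/2)) * p 2,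
      Real.sin (2 * Real.pi * ε * (p 0 + 1/2)) * p 1 +
        Real.cos (2 * Real.pi * ε * (p 0 + 1/2)) * p 2]

/-- The linear action of a 3×3 real matrix on Euclidean 3-space. -/
noncomputable def matAct (g : Matrix (Fin 3) (Fin 3) ℝ) (p : EuclideanSpace ℝ (Fin 3)) :
    EuclideanSpace ℝ (Fin 3) :=
  (WithLp.equiv 2 (Fin 3 → ℝ)).symm (g.mulVec ((WithLp.equiv 2 (Fin 3 → ℝ)) p))

namespace TwistAux

lemma norm_of_sumsq (p : Fin 3 → ℝ) (h : p 0 ^ 2 + p 1 ^ 2 + p 2 ^ 2 = 1/4) :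
    ‖(WithLp.equiv 2 (Fin 3 → ℝ)).symm p‖ = 1/2 := by
  rw [EuclideanSpace.norm_eq]
  have he : ∀ i, ((WithLp.equiv 2 (Fin 3 → ℝ)).symm p) i = p i := fun i => rfl
  simp only [he, Fin.sum_univ_three, Real.norm_eq_abs, sq_abs]
  rw [h, show (1/4 : ℝ) = (1/2) ^ 2 by norm_num, Real.sqrt_sq (by norm_num)]

lemma fix_translate (ε : ℝ) (g : Matrix (Fin 3) (Fin 3) ℝ) (p : Fin 3 → ℝ)
    (hfix : (g * Rx (2 * Real.pi * ε * (p 0 + 1/2))).mulVec p = p) :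
    matAct g (twist ε ((WithLp.equiv 2 (Fin 3 → ℝ)).symm p)) =
      (WithLp.equiv 2 (Fin 3 → ℝ)).symm p := by
  have he : ∀ i, ((WithLp.equiv 2 (Fin 3 → ℝ)).symm p) i = p i := fun i => rfl
  unfold twist matAct
  simp only [he, Equiv.apply_symm_apply]
  rw [← Rx_mulVec, Matrix.mulVec_mulVec, hfix]

end TwistAux

/-- There is `ε₀ > 0` such that for every `0 < ε < ε₀` and every `g ∈ SO(3)`, the map
`g ∘ f_ε` has at least two distinct fixed points on the sphere `{‖p‖ = 1/2}`. -/
theorem twist_has_two_fixed_points :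
    ∃ ε₀ > (0:ℝ), ∀ ε : ℝ, 0 < ε → ε < ε₀ →
      ∀ g : Matrix (Fin 3) (Fin 3) ℝ, g.transpose * g = 1 → g.det = 1 →
        ∃ p q : EuclideanSpace ℝ (Fin 3), ‖p‖ = 1/2 ∧ ‖q‖ = 1/2 ∧ p ≠ q ∧
          matAct g (twist ε p) = p ∧ matAct g (twist ε q) = q := by
  refine ⟨1, one_pos, ?_⟩
  intro ε hε hε1 g hg hgdet
  obtain ⟨p, q, hpq, hpsq, hqsq, hfp, hfq⟩ := TwistAux.core g hg hgdet (2 * Real.pi * ε)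
  exact ⟨(WithLp.equiv 2 (Fin 3 → ℝ)).symm p, (WithLp.equiv 2 (Fin 3 → ℝ)).symm q,
    TwistAux.norm_of_sumsq p hpsq, TwistAux.norm_of_sumsq q hqsq,
    fun h => hpq ((WithLp.equiv 2 (Fin 3 → ℝ)).symm.injective h),
    TwistAux.fix_translate ε g p hfp, TwistAux.fix_translate ε g q hfq⟩
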